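/- Define the rational functions q(x,t) = (x⁴ + 2x³ + 24xt + 12t) / (2(2x³ + 3x² + 12t)) and r(x,t) = −6(2x⁴ + 4x³ + 3x² − 24xt − 12t) / ((x³ − 12t)(x³ + 3x² + 3x − 12t)). At every point (x,t) where 2x³ + 3x² + 12t ≠ 0, x³ − 12t ≠ 0 and x³ + 3x² + 3x − 12t ≠ 0, q satisfies ∂_t q = ∂_x³ q + 3 q (∂_x² q) r + 3 (∂_x q)² r + 3 (∂_x q)(q r)². -/

import Mathlib

noncomputable def q (x t : ℝ) : ℝ :=
  (x ^ 4 + 2 * x ^ 3 + 24 * x * t + 12 * t) / (2 * (2 * x ^ 3 + 3 * x ^ 2 + 12 * t))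

noncomputable def r (x t : ℝ) : ℝ :=
  -6 * (2 * x ^ 4 + 4 * x ^ 3 + 3 * x ^ 2 - 24 * x * t - 12 * t)
    / ((x ^ 3 - 12 * t) * (x ^ 3 + 3 * x ^ 2 + 3 * x - 12 * t))

/-!
Each `x`-derivative of the rational function `P / D` is `N_k / D ^ (k + 1)`, where the numerators
`N_k` obey the quotient-rule recursion `N_{k+1} = N_k' D - (k + 1) N_k D'`. Applied to `q` this gives
`∂ₓᵏ q` as explicit rational functions with denominator a power of `2 x³ + 3 x² + 12 t`, while
`∂ₜ q = 18 x² (x + 1)² / (2 x³ + 3 x² + 12 t)²`. After substitution the flow equation is an identity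
of rational functions, checked by clearing denominators.
-/

open Polynomial

namespace Polynomial

noncomputable def iteratedDerivNum {R : Type*} [Ring R] (P D : R[X]) : ℕ → R[X]
  | 0 => P
  | k + 1 => derivative (iteratedDerivNum P D k) * D
      - (k + 1 : R[X]) * iteratedDerivNum P D k * derivative D

variable {𝕜 : Type*} [NontriviallyNormedField 𝕜]

theorem hasDerivAt_eval_div_eval_pow (P D : 𝕜[X]) (n : ℕ) {x : 𝕜} (hx : D.eval x ≠ 0) :
    HasDerivAt (fun y => P.eval y / D.eval y ^ (n + 1))
      ((derivative P * D - (n + 1 : 𝕜[X]) * P * derivative D).eval x / D.eval x ^ (n + 2)) x := by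
  refine ((P.hasDerivAt x).fun_div ((D.hasDerivAt x).fun_pow (n + 1))
    (pow_ne_zero _ hx)).congr_deriv ?_
  simp only [eval_sub, eval_mul, eval_add, eval_natCast, eval_one]
  field_simp
  push_cast
  ring

theorem iteratedDeriv_eval_div_eval (P D : 𝕜[X]) (k : ℕ) {x : 𝕜} (hx : D.eval x ≠ 0) :
    iteratedDeriv k (fun y => P.eval y / D.eval y) x
      = (iteratedDerivNum P D k).eval x / D.eval x ^ (k + 1) := by
  induction k generalizing x with
  | zero => simp [iteratedDerivNum]
  | succ k ih =>
    have hD : ∀ᶠ y in nhds x, D.eval y ≠ 0 := D.continuousAt.eventually_ne hx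
    rw [iteratedDeriv_succ, Filter.EventuallyEq.deriv_eq (hD.mono fun y hy => ih hy)]
    exact (hasDerivAt_eval_div_eval_pow _ D k hx).deriv

end Polynomial

noncomputable def qNum (t : ℝ) : ℝ[X] := X ^ 4 + 2 * X ^ 3 + C (24 * t) * X + C (12 * t)

noncomputable def qDen (t : ℝ) : ℝ[X] := 2 * (2 * X ^ 3 + 3 * X ^ 2 + C (12 * t))

theorem q_eq_eval_div_eval (t : ℝ) :
    (fun y => q y t) = fun y => (qNum t).eval y / (qDen t).eval y := by
  ext y
  simp only [q, qNum, qDen, eval_add, eval_mul, eval_pow, eval_X, eval_C, eval_ofNat]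
  ring

theorem deriv_q_t {x t : ℝ} (h : 2 * x ^ 3 + 3 * x ^ 2 + 12 * t ≠ 0) :
    deriv (fun s => q x s) t = 18 * x ^ 2 * (x + 1) ^ 2 / (2 * x ^ 3 + 3 * x ^ 2 + 12 * t) ^ 2 := by
  set P : ℝ[X] := C (x ^ 4 + 2 * x ^ 3) + C (24 * x + 12) * X
  set D : ℝ[X] := C (2 * (2 * x ^ 3 + 3 * x ^ 2)) + 24 * X
  have hq : (fun s => q x s) = fun s => P.eval s / D.eval s := by
    ext s
    simp only [q, P, D, eval_add, eval_mul, eval_X, eval_C, eval_ofNat]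
    ring
  have hD : D.eval t = 2 * (2 * x ^ 3 + 3 * x ^ 2 + 12 * t) := by
    simp only [D, eval_add, eval_mul, eval_X, eval_C, eval_ofNat]
    ring
  have hD₀ : D.eval t ≠ 0 := hD ▸ mul_ne_zero two_ne_zero h
  rw [← iteratedDeriv_one, hq, iteratedDeriv_eval_div_eval P D 1 hD₀, hD]
  simp only [iteratedDerivNum, P, D, derivative_add, derivative_mul, derivative_C, derivative_X,
    derivative_ofNat, Nat.cast_zero, eval_add, eval_sub, eval_mul, eval_X, eval_C, eval_ofNat,
    eval_zero, eval_one]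
  rw [div_eq_div_iff (pow_ne_zero _ (hD ▸ hD₀)) (pow_ne_zero _ h)]
  ring

theorem stmt6 (x t : ℝ)
    (h1 : 2 * x ^ 3 + 3 * x ^ 2 + 12 * t ≠ 0)
    (h2 : x ^ 3 - 12 * t ≠ 0)
    (h3 : x ^ 3 + 3 * x ^ 2 + 3 * x - 12 * t ≠ 0) :
    deriv (fun s => q x s) t
      = iteratedDeriv 3 (fun y => q y t) x
        + 3 * q x t * iteratedDeriv 2 (fun y => q y t) x * r x t
        + 3 * (deriv (fun y => q y t) x) ^ 2 * r x t
        + 3 * deriv (fun y => q y t) x * (q x t * r x t) ^ 2 := by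
  have hD : (qDen t).eval x ≠ 0 := by simpa [qDen] using h1
  rw [deriv_q_t h1, ← iteratedDeriv_one, q_eq_eval_div_eval,
    iteratedDeriv_eval_div_eval _ _ _ hD, iteratedDeriv_eval_div_eval _ _ _ hD,
    iteratedDeriv_eval_div_eval _ _ _ hD]
  simp only [iteratedDerivNum, qNum, qDen, q, r, derivative_add, derivative_mul, derivative_sub,
    derivative_X_pow, derivative_C, derivative_X, derivative_ofNat, eval_add, eval_sub, eval_mul,
    eval_pow, eval_X, eval_C, eval_ofNat]
  norm_num
  -- `field_simp` only recognises the denominators' nonvanishing in its own normal form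
  have h1' : x ^ 2 * (x * 2 + 3) + 12 * t ≠ 0 := fun h => h1 (by linear_combination h)
  have h3' : x * (x * (x + 3) + 3) - 12 * t ≠ 0 := fun h => h3 (by linear_combination h)
  field_simp
  ring
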